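/- Consider the two-player Prisoners' Dilemma G with action sets A₁ = A₂ = {C, D} and utilities u₁(C,C)=3, u₁(C,D)=1, u₁(D,C)=4, u₁(D,D)=2 and u₂(C,C)=3, u₂(C,D)=4, u₂(D,C)=1, u₂(D,D)=2. With initial reference point a₀ = (D,D), k = 1, and the strictly alternating player function in which player 1 (Row) moves first, the unique no-harm equilibrium outcome of Γ(a₀,k,I) is (C,C). -/

import Mathlib

namespace NoHarm

/-- A finite normal form game with `n` players: finite action sets `A i`,
nonempty, with decidable equality, and utility functions `u i : Profile → ℝ`. -/
structure Game (n : ℕ) where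
  A : Fin n → Type
  fintypeA : ∀ i, Fintype (A i)
  decA : ∀ i, DecidableEq (A i)
  neA : ∀ i, Nonempty (A i)
  u : Fin n → (∀ i, A i) → ℝ

attribute [instance] Game.fintypeA Game.decA Game.neA

/-- Action profiles of `G`. -/
abbrev Profile {n : ℕ} (G : Game n) : Type := ∀ i, G.A i

/-- A recorded move in the extensive form game `Γ`: the acting player together
with their choice (`none` = pass, `some a` = choose action `a`; choosing the
current component of the state is "staying", any other action is "moving"). -/
abbrev Move {n : ℕ} (G : Game n) : Type := Σ i : Fin n, Option (G.A i)

/-- A node of `Γ`, identified with the history of moves leading to it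
(the root is `[]`). -/
abbrev Hist {n : ℕ} (G : Game n) : Type := List (Move G)

variable {n : ℕ}

/-- One step of the left fold computing, along a history, the triple
(current state, current reference point, player who established the current
reference point by staying -- `none` for the initial reference point). -/
def stepFold (G : Game n) (x : Profile G × Profile G × Option (Fin n)) (m : Move G) :
    Profile G × Profile G × Option (Fin n) :=
  match m with
  | ⟨_, none⟩ => x
  | ⟨i, some a⟩ =>
    if a = x.1 i then (x.1, x.1, some i)
    else (Function.update x.1 i a, x.2.1, x.2.2)

/-- The (state, reference point, proposer) data at the node `h` of `Γ(a0,·,·)`. -/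
def fold3 (G : Game n) (a0 : Profile G) (h : Hist G) :
    Profile G × Profile G × Option (Fin n) :=
  h.foldl (stepFold G) (a0, a0, none)

/-- The state `S(x)` at a node. -/
def state (G : Game n) (a0 : Profile G) (h : Hist G) : Profile G := (fold3 G a0 h).1

/-- The reference point at a node (the most recent state at which a player
stayed, initially `a0`). -/
def refpt (G : Game n) (a0 : Profile G) (h : Hist G) : Profile G := (fold3 G a0 h).2.1

/-- The player who established the current reference point by staying
(`none` if it is still the initial reference point `a0`). -/
def proposer (G : Game n) (a0 : Profile G) (h : Hist G) : Option (Fin n) :=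
  (fold3 G a0 h).2.2

/-- `m` is a stay action at the node `h`: the mover chooses exactly the
component of the current state belonging to them. -/
def IsStay (G : Game n) (a0 : Profile G) (h : Hist G) (m : Move G) : Prop :=
  m.2 = some (state G a0 h m.1)

/-- Termination condition (i): one player stayed at a state `b`, making it
the reference point, and a different player subsequently also stays at `b`. -/
def TerminalStay (G : Game n) (a0 : Profile G) (h : Hist G) : Prop :=
  ∃ (h' : Hist G) (m : Move G) (i : Fin n),
    h = h' ++ [m] ∧ IsStay G a0 h' m ∧ refpt G a0 h' = state G a0 h' ∧
    proposer G a0 h' = some i ∧ i ≠ m.1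

/-- Termination condition (ii): all `n` players consecutively pass
(the last `n` moves are passes and every player is among their movers). -/
def TerminalPass (G : Game n) (h : Hist G) : Prop :=
  n ≤ h.length ∧ (∀ m ∈ h.drop (h.length - n), m.2 = none) ∧
    (∀ i : Fin n, ∃ m ∈ h.drop (h.length - n), m.1 = i)

/-- Terminal nodes of `Γ(a0,·,·)`. -/
def Terminal (G : Game n) (a0 : Profile G) (h : Hist G) : Prop :=
  TerminalStay G a0 h ∨ TerminalPass G h

/-- Number of predecessor nodes of `h` having the same state as `h` at which
the move `m` was made. -/
def countAct (G : Game n) (a0 : Profile G) (h : Hist G) (m : Move G) : ℕ :=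
  ((Finset.range h.length).filter
    (fun t => h[t]? = some m ∧ state G a0 (h.take t) = state G a0 h)).card

/-- Availability of the choice `c` for player `i` at node `h`: pass is always
available, and an action `a` is available iff `i` has chosen `a` at fewer than
`k` predecessor nodes carrying the same state as `h`. -/
def availAct (G : Game n) (a0 : Profile G) (k : ℕ) (h : Hist G) {i : Fin n}
    (c : Option (G.A i)) : Prop :=
  ∀ a : G.A i, c = some a → countAct G a0 h ⟨i, some a⟩ < k

/-- `h` is a (valid) node of the game tree of `Γ(a0,k,I)`: at each step the
recorded mover is the active player given by the player function `I`, the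
chosen action was available, and no proper predecessor is terminal. -/
structure IsNode (G : Game n) (a0 : Profile G) (k : ℕ) (I : Hist G → Fin n)
    (h : Hist G) : Prop where
  mover : ∀ (t : ℕ) (ht : t < h.length), (h.get ⟨t, ht⟩).1 = I (h.take t)
  avail : ∀ (t : ℕ) (ht : t < h.length), availAct G a0 k (h.take t) (h.get ⟨t, ht⟩).2
  nonterm : ∀ t < h.length, ¬ Terminal G a0 (h.take t)

/-- The player function is admissible: along every path of play the numbers of
nodes at which any two players have been active differ by at most one. -/
def Admissible (G : Game n) (a0 : Profile G) (k : ℕ) (I : Hist G → Fin n) : Prop :=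
  ∀ h, IsNode G a0 k I h → ∀ i j : Fin n,
    (h.map Sigma.fst).count i ≤ (h.map Sigma.fst).count j + 1

/-- A pure strategy of player `i`: a choice (pass or an action) at every node. -/
abbrev Strategy (G : Game n) (i : Fin n) : Type := Hist G → Option (G.A i)

/-- A pure strategy profile. -/
abbrev StratProfile (G : Game n) : Type := ∀ i, Strategy G i

/-- A strategy profile is valid if at every non-terminal node of the tree the
active player's prescribed choice is available. -/
def ValidProfile (G : Game n) (a0 : Profile G) (k : ℕ) (I : Hist G → Fin n)
    (σ : StratProfile G) : Prop :=
  ∀ h, IsNode G a0 k I h → ¬ Terminal G a0 h → availAct G a0 k h (σ (I h) h)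

open Classical in
/-- Play according to `σ` for (at most) the given number of steps from a node,
stopping at terminal nodes. -/
noncomputable def playN (G : Game n) (a0 : Profile G) (I : Hist G → Fin n)
    (σ : StratProfile G) : ℕ → Hist G → Hist G
  | 0, h => h
  | (t + 1), h =>
    if Terminal G a0 h then h
    else playN G a0 I σ t (h ++ [⟨I h, σ (I h) h⟩])

/-- A (generous) upper bound for the length of any play of `Γ(a0,k,I)`. -/
def bound (G : Game n) (k : ℕ) : ℕ :=
  ((k + 2) * (Fintype.card (Profile G) + 2) * ((∑ i, Fintype.card (G.A i)) + 2) + 2)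
    * (n + 2) * 4

/-- The outcome of `σ` in the subgame rooted at `h`: the reference point at the
terminal node reached by playing `σ` from `h`. -/
noncomputable def outcomeFrom (G : Game n) (a0 : Profile G) (k : ℕ)
    (I : Hist G → Fin n) (σ : StratProfile G) (h : Hist G) : Profile G :=
  refpt G a0 (playN G a0 I σ (bound G k + 1) h)

/-- The outcome of the strategy profile `σ` in `Γ(a0,k,I)`. -/
noncomputable def outcome (G : Game n) (a0 : Profile G) (k : ℕ)
    (I : Hist G → Fin n) (σ : StratProfile G) : Profile G :=
  outcomeFrom G a0 k I σ []

/-- `σ` satisfies the no-harm principle: every stay action it prescribes, at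
every (on- or off-path) non-terminal node of the tree, does not harm any other
player relative to the reference point at that node. -/
def SatNHP (G : Game n) (a0 : Profile G) (k : ℕ) (I : Hist G → Fin n)
    (σ : StratProfile G) : Prop :=
  ∀ h, IsNode G a0 k I h → ¬ Terminal G a0 h →
    σ (I h) h = some (state G a0 h (I h)) →
    ∀ j, j ≠ I h → G.u j (refpt G a0 h) ≤ G.u j (state G a0 h)

/-- No-harm equilibrium of `Γ(a0,k,I)`: a valid strategy profile satisfying the
NHP such that at every non-terminal node the active player's choice is a best
response among deviations keeping the profile valid and NHP-compliant. -/
def NHE (G : Game n) (a0 : Profile G) (k : ℕ) (I : Hist G → Fin n)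
    (σ : StratProfile G) : Prop :=
  ValidProfile G a0 k I σ ∧ SatNHP G a0 k I σ ∧
  ∀ h, IsNode G a0 k I h → ¬ Terminal G a0 h →
    ∀ τ : Strategy G (I h),
      ValidProfile G a0 k I (Function.update σ (I h) τ) →
      SatNHP G a0 k I (Function.update σ (I h) τ) →
      G.u (I h) (outcomeFrom G a0 k I (Function.update σ (I h) τ) h) ≤
        G.u (I h) (outcomeFrom G a0 k I σ h)

/-- Subgame perfect equilibrium of `Γ(a0,k,I)` (no NHP constraint). -/
def SPE (G : Game n) (a0 : Profile G) (k : ℕ) (I : Hist G → Fin n)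
    (σ : StratProfile G) : Prop :=
  ValidProfile G a0 k I σ ∧
  ∀ h, IsNode G a0 k I h → ¬ Terminal G a0 h →
    ∀ τ : Strategy G (I h),
      ValidProfile G a0 k I (Function.update σ (I h) τ) →
      G.u (I h) (outcomeFrom G a0 k I (Function.update σ (I h) τ) h) ≤
        G.u (I h) (outcomeFrom G a0 k I σ h)

/-- `b` Pareto dominates `a`. -/
def ParetoDom (G : Game n) (b a : Profile G) : Prop :=
  (∀ i, G.u i a ≤ G.u i b) ∧ ∃ i, G.u i a < G.u i b

/-- `a` is Pareto optimal. -/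
def ParetoOpt (G : Game n) (a : Profile G) : Prop := ∀ b, ¬ ParetoDom G b a

/-- `b` strictly Pareto dominates `a`. -/
def StrictDom (G : Game n) (b a : Profile G) : Prop := ∀ i, G.u i a < G.u i b

/-- `a` is weakly Pareto optimal. -/
def WeakParetoOpt (G : Game n) (a : Profile G) : Prop := ∀ b, ¬ StrictDom G b a

/-- Preferences are strict: each utility function is injective on profiles. -/
def StrictPrefs (G : Game n) : Prop := ∀ i, Function.Injective (G.u i)


/-- The Prisoners' Dilemma: two players, actions `0 = C`, `1 = D`, with
`u₁(C,C)=3, u₁(C,D)=1, u₁(D,C)=4, u₁(D,D)=2` and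
`u₂(C,C)=3, u₂(C,D)=4, u₂(D,C)=1, u₂(D,D)=2`. -/
def pd : Game 2 where
  A _ := Fin 2
  fintypeA _ := inferInstance
  decA _ := inferInstance
  neA _ := inferInstance
  u i s :=
    if s 0 = 0 then (if s 1 = 0 then 3 else if i = 0 then 1 else 4)
    else (if s 1 = 0 then (if i = 0 then 4 else 1) else 2)

/-- The strictly alternating player function with player `0` (Row) first. -/
def altI : Hist pd → Fin 2 := fun h => ⟨h.length % 2, by omega⟩

/-- (D,D). -/
def ddProf : Profile pd := fun _ => (1 : Fin 2)

/-- (C,C). -/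
def ccProf : Profile pd := fun _ => (0 : Fin 2)


/-! ### Auxiliary development for the Prisoners' Dilemma analysis -/

section PDAux

/-- Encoded states: pair of actions. -/
abbrev S2 : Type := Fin 2 × Fin 2

def encS (s : Profile pd) : S2 := (s 0, s 1)

def decS (p : S2) : Profile pd := ![p.1, p.2]

@[simp] lemma decS_encS (s : Profile pd) : decS (encS s) = s := by
  funext i
  fin_cases i <;> rfl

lemma encS_decS (p : S2) : encS (decS p) = p := rfl

lemma encS_inj {s s' : Profile pd} (h : encS s = encS s') : s = s' := by
  have := congrArg decS h
  simpa using this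

/-- The component of an encoded state. -/
def atS (p : S2) (i : Fin 2) : Fin 2 := if i = 0 then p.1 else p.2

@[simp] lemma atS_encS (s : Profile pd) (i : Fin 2) : atS (encS s) i = s i := by
  fin_cases i <;> rfl

/-- Setting a component of an encoded state. -/
def setS (p : S2) (i : Fin 2) (a : Fin 2) : S2 := if i = 0 then (a, p.2) else (p.1, a)

lemma setS_encS (s : Profile pd) (i : Fin 2) (a : Fin 2) :
    setS (encS s) i a = encS (Function.update s i a) := by
  fin_cases i <;>
    simp [setS, encS, Function.update] <;> rfl

/-- Integer utilities mirroring `pd.u`. -/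
def uz (i : Fin 2) (p : S2) : ℤ :=
  if p.1 = 0 then (if p.2 = 0 then 3 else if i = 0 then 1 else 4)
  else (if p.2 = 0 then (if i = 0 then 4 else 1) else 2)

lemma u_decS (i : Fin 2) (p : S2) : pd.u i (decS p) = ((uz i p : ℤ) : ℝ) := by
  rcases p with ⟨x, y⟩
  fin_cases x <;> fin_cases y <;> fin_cases i <;> · norm_num [uz]; try rfl

lemma u_eq_uz (i : Fin 2) (s : Profile pd) : pd.u i s = ((uz i (encS s) : ℤ) : ℝ) := by
  conv_lhs => rw [← decS_encS s]
  exact u_decS i (encS s)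

lemma uz_le_four (i : Fin 2) (p : S2) : uz i p ≤ 4 := by
  rcases p with ⟨x, y⟩; fin_cases x <;> fin_cases y <;> fin_cases i <;> simp [uz]

lemma uz_inj (i : Fin 2) {p q : S2} (h : uz i p = uz i q) : p = q := by
  rcases p with ⟨x, y⟩; rcases q with ⟨x', y'⟩
  fin_cases x <;> fin_cases y <;> fin_cases x' <;> fin_cases y' <;>
    fin_cases i <;> simp_all [uz]

lemma u_pd_inj (i : Fin 2) : Function.Injective (pd.u i) := by
  intro s s' h
  rw [u_eq_uz, u_eq_uz] at h
  have h2 : uz i (encS s) = uz i (encS s') := by exact_mod_cast h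
  exact encS_inj (uz_inj i h2)

lemma u_le_iff_uz {i : Fin 2} {s s' : Profile pd} :
    pd.u i s ≤ pd.u i s' ↔ uz i (encS s) ≤ uz i (encS s') := by
  rw [u_eq_uz, u_eq_uz]; exact_mod_cast Iff.rfl

/-! ### basic fold lemmas -/

lemma fold3_append (h h' : Hist pd) :
    fold3 pd ddProf (h ++ h') = h'.foldl (stepFold pd) (fold3 pd ddProf h) := by
  simp [fold3, List.foldl_append]

lemma fold3_snoc (h : Hist pd) (m : Move pd) :
    fold3 pd ddProf (h ++ [m]) = stepFold pd (fold3 pd ddProf h) m := by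
  simp [fold3_append]

lemma state_take_append {t : ℕ} {h h' : Hist pd} (ht : t ≤ h.length) :
    (h ++ h').take t = h.take t :=
  List.take_append_of_le_length ht

lemma altI_snoc (h : Hist pd) (m : Move pd) : altI (h ++ [m]) = altI h + 1 := by
  simp only [altI, List.length_append, List.length_cons, List.length_nil]
  have : h.length % 2 = 0 ∨ h.length % 2 = 1 := by omega
  rcases this with h2 | h2 <;> · apply Fin.ext; simp [Fin.add_def, h2]; omega


/-! ### Encoded positions -/

/-- Helper: injectivity of move constructors. -/
lemma move_mk_inj {i i' : Fin 2} {c c' : Option (Fin 2)} :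
    (⟨i, c⟩ : Move pd) = ⟨i', c'⟩ ↔ i = i' ∧ c = c' := by
  constructor
  · intro hh
    obtain ⟨h1, h2⟩ := Sigma.mk.inj_iff.mp hh
    refine ⟨h1, ?_⟩
    cases h1
    exact eq_of_heq h2
  · rintro ⟨rfl, rfl⟩; rfl

lemma fin2_ne_iff : ∀ (i j : Fin 2), j ≠ i ↔ j = i + 1 := by decide

lemma fin2_cover {a b : Fin 2} (hab : a ≠ b) (i : Fin 2) : i = a ∨ i = b := by
  revert hab; revert i; revert a; revert b; decide

structure Pos where
  st : S2
  rf : S2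
  pr : Option (Fin 2)
  used : List ((Fin 2 × Fin 2) × S2)
  la : Option (Fin 2 × Option (Fin 2))
  term : Bool
  turn : Fin 2
deriving DecidableEq

def encM (m : Move pd) : Fin 2 × Option (Fin 2) := (m.1, m.2)

def stepP (p : Pos) (m : Fin 2 × Option (Fin 2)) : Pos where
  st := match m.2 with
    | none => p.st
    | some a => if a = atS p.st m.1 then p.st else setS p.st m.1 a
  rf := match m.2 with
    | none => p.rf
    | some a => if a = atS p.st m.1 then p.st else p.rf
  pr := match m.2 with
    | none => p.pr
    | some a => if a = atS p.st m.1 then some m.1 else p.pr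
  used := match m.2 with
    | none => p.used
    | some a => ((m.1, a), p.st) :: p.used
  la := some m
  term :=
    (decide (m.2 = some (atS p.st m.1)) && decide (p.rf = p.st) &&
      (match p.pr with | some j => decide (j ≠ m.1) | none => false)) ||
    (decide (m.2 = none) &&
      (match p.la with | some (j, none) => decide (j ≠ m.1) | _ => false))
  turn := p.turn + 1

def pos0 : Pos := ⟨(1,1), (1,1), none, [], none, false, 0⟩

def posOf (h : Hist pd) : Pos := h.foldl (fun p m => stepP p (encM m)) pos0

lemma posOf_snoc (h : Hist pd) (m : Move pd) :
    posOf (h ++ [m]) = stepP (posOf h) (encM m) := by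
  simp [posOf, List.foldl_append]

def usedSpec (h : Hist pd) (l : List ((Fin 2 × Fin 2) × S2)) : Prop :=
  ∀ (i a : Fin 2) (s : S2),
    l.count ((i, a), s) = ((Finset.range h.length).filter
      (fun t => h[t]? = some ⟨i, some a⟩ ∧ encS (state pd ddProf (h.take t)) = s)).card

structure InvP (h : Hist pd) (p : Pos) : Prop where
  hst : p.st = encS (state pd ddProf h)
  hrf : p.rf = encS (refpt pd ddProf h)
  hpr : p.pr = proposer pd ddProf h
  hused : usedSpec h p.used
  hla : p.la = h.getLast?.map encM
  hterm : p.term = true ↔ Terminal pd ddProf h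
  hturn : p.turn = altI h

/-! ### Terminal characterizations -/

lemma not_terminal_nil : ¬ Terminal pd ddProf [] := by
  rintro (⟨h', m, i, heq, -⟩ | ⟨hlen, -⟩)
  · exact absurd heq (by simp)
  · simp only [List.length_nil] at hlen; omega

lemma terminalStay_snoc (h : Hist pd) (m : Move pd) :
    TerminalStay pd ddProf (h ++ [m]) ↔
      (m.2 = some (state pd ddProf h m.1) ∧ refpt pd ddProf h = state pd ddProf h ∧
        ∃ i, proposer pd ddProf h = some i ∧ i ≠ m.1) := by
  constructor
  · rintro ⟨h', m', i, heq, hs, hr, hp, hne⟩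
    obtain ⟨rfl, hm⟩ := List.append_inj' heq rfl
    obtain rfl : m = m' := by simpa using hm
    exact ⟨hs, hr, i, hp, hne⟩
  · rintro ⟨hs, hr, i, hp, hne⟩
    exact ⟨h, m, i, rfl, hs, hr, hp, hne⟩

lemma terminalPass_snoc (h : Hist pd) (m : Move pd) :
    TerminalPass pd (h ++ [m]) ↔
      (m.2 = none ∧ ∃ m', h.getLast? = some m' ∧ m'.2 = none ∧ m'.1 ≠ m.1) := by
  have hlen2 : (h ++ [m]).length = h.length + 1 := by simp
  constructor
  · rintro ⟨hlen, hpass, hcov⟩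
    rw [hlen2] at hlen hpass hcov
    have hne : h ≠ [] := by rintro rfl; simp at hlen
    have hsplit : h ++ [m] = h.dropLast ++ ([h.getLast hne] ++ [m]) := by
      rw [← List.append_assoc, List.dropLast_append_getLast]
    have hidx : h.length + 1 - 2 = h.dropLast.length := by
      simp only [List.length_dropLast]; omega
    have hdrop : (h ++ [m]).drop (h.length + 1 - 2) = [h.getLast hne, m] := by
      rw [hsplit, hidx, List.drop_left]; rfl
    rw [hdrop] at hpass hcov
    have hm : m.2 = none := hpass m (by simp)
    have hlast : (h.getLast hne).2 = none := hpass _ (by simp)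
    refine ⟨hm, h.getLast hne, List.getLast?_eq_getLast hne, hlast, ?_⟩
    intro hEq
    obtain ⟨mv, hmv, hmv1⟩ := hcov (m.1 + 1)
    have h2 : ∀ j : Fin 2, ¬ (j = j + 1) := by decide
    rcases List.mem_pair.mp hmv with rfl | h4
    · exact h2 m.1 (hEq.symm.trans hmv1)
    · rw [h4] at hmv1; exact h2 m.1 hmv1
  · rintro ⟨hm, m', hlast, hm', hne⟩
    have hne0 : h ≠ [] := by rintro rfl; simp at hlast
    have hget : h.getLast hne0 = m' := by
      have h3 := List.getLast?_eq_getLast hne0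
      rw [hlast] at h3; exact (Option.some.inj h3).symm
    have hsplit : h ++ [m] = h.dropLast ++ ([m'] ++ [m]) := by
      rw [← List.append_assoc, ← hget, List.dropLast_append_getLast]
    have hidx : h.length + 1 - 2 = h.dropLast.length := by
      simp only [List.length_dropLast]; omega
    have hdrop : (h ++ [m]).drop ((h ++ [m]).length - 2) = [m', m] := by
      rw [hlen2, hsplit, hidx, List.drop_left]; rfl
    refine ⟨by rw [hlen2]; have := List.length_pos_iff.mpr hne0; omega, ?_, ?_⟩
    · rw [hdrop]; intro mv hmv
      rcases List.mem_pair.mp hmv with rfl | rfl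
      · exact hm'
      · exact hm
    · rw [hdrop]; intro i
      rcases fin2_cover hne i with rfl | rfl
      · exact ⟨m', by simp⟩
      · exact ⟨m, by simp⟩

lemma length_nonempty_of_getLast? {h : Hist pd} {m' : Move pd}
    (hl : h.getLast? = some m') : h ≠ [] := by
  rintro rfl; simp at hl


lemma encS_eq_iff {s s' : Profile pd} : encS s = encS s' ↔ s = s' :=
  ⟨encS_inj, fun h => congrArg _ h⟩

lemma fold3_eq (h : Hist pd) :
    fold3 pd ddProf h = (state pd ddProf h, refpt pd ddProf h, proposer pd ddProf h) := rfl

lemma InvP_nil : InvP [] pos0 := by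
  refine ⟨rfl, rfl, rfl, ?_, rfl, ?_, rfl⟩
  · intro i a s; simp [pos0]
  · simp only [pos0, Bool.false_eq_true, false_iff]; exact not_terminal_nil

lemma InvP_step {h : Hist pd} {p : Pos} (inv : InvP h p) (m : Move pd) :
    InvP (h ++ [m]) (stepP p (encM m)) := by
  obtain ⟨i, c⟩ := m
  have hget : ∀ t, t < h.length → (h ++ [(⟨i, c⟩ : Move pd)])[t]? = h[t]? := by
    intro t ht; rw [List.getElem?_append, if_pos ht]
  have htake : ∀ t, t ≤ h.length → (h ++ [(⟨i, c⟩ : Move pd)]).take t = h.take t := by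
    intro t ht; exact state_take_append ht
  have hkey : fold3 pd ddProf (h ++ [(⟨i, c⟩ : Move pd)]) =
      stepFold pd (state pd ddProf h, refpt pd ddProf h, proposer pd ddProf h) ⟨i, c⟩ := by
    rw [fold3_snoc, fold3_eq]
  constructor
  case hst =>
    show _ = encS (fold3 pd ddProf (h ++ [(⟨i, c⟩ : Move pd)])).1
    rw [hkey]
    cases c with
    | none => simpa [stepP, stepFold, encM] using inv.hst
    | some a =>
      by_cases ha : a = state pd ddProf h i
      · simp [stepP, stepFold, encM, ha, inv.hst]
        exact if_pos ((congrArg (fun x => atS x i) inv.hst).trans (atS_encS _ _)).symm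
      · simp only [stepP, stepFold, encM, inv.hst, atS_encS, if_neg ha]
        refine (if_neg fun e => ha (e.trans ((congrArg (fun x => atS x i) inv.hst).trans (atS_encS _ _)))).trans ?_
        exact setS_encS _ _ _
  case hrf =>
    show _ = encS (fold3 pd ddProf (h ++ [(⟨i, c⟩ : Move pd)])).2.1
    rw [hkey]
    cases c with
    | none => simpa [stepP, stepFold, encM] using inv.hrf
    | some a =>
      by_cases ha : a = state pd ddProf h i
      · simp [stepP, stepFold, encM, ha, inv.hst, atS_encS]
        exact if_pos ((congrArg (fun x => atS x i) inv.hst).trans (atS_encS _ _)).symm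
      · simp [stepP, stepFold, encM, inv.hst, atS_encS, ha, inv.hrf]
        exact if_neg fun e => ha (e.trans ((congrArg (fun x => atS x i) inv.hst).trans (atS_encS _ _)))
  case hpr =>
    show _ = (fold3 pd ddProf (h ++ [(⟨i, c⟩ : Move pd)])).2.2
    rw [hkey]
    cases c with
    | none => simpa [stepP, stepFold, encM] using inv.hpr
    | some a =>
      by_cases ha : a = state pd ddProf h i
      · simp [stepP, stepFold, encM, ha, inv.hst, atS_encS]
        exact if_pos ((congrArg (fun x => atS x i) inv.hst).trans (atS_encS _ _)).symm
      · simp [stepP, stepFold, encM, inv.hst, atS_encS, ha, inv.hpr]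
        exact if_neg fun e => ha (e.trans ((congrArg (fun x => atS x i) inv.hst).trans (atS_encS _ _)))
  case hla => simp [stepP, encM, List.getLast?_concat]
  case hturn =>
    show _ = altI (h ++ [⟨i, c⟩])
    rw [altI_snoc]; simp [stepP, inv.hturn]
  case hused =>
    intro i' a' s
    have hlen : (h ++ [(⟨i, c⟩ : Move pd)]).length = h.length + 1 := by simp
    have hrange : ∀ (P : ℕ → Prop) [DecidablePred P],
        (Finset.range (h.length + 1)).filter P =
          if P h.length then insert h.length ((Finset.range h.length).filter P)
          else (Finset.range h.length).filter P := by
      intro P _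
      rw [Finset.range_add_one, Finset.filter_insert]
    have hcongr : ∀ t ∈ Finset.range h.length,
        ((h ++ [(⟨i, c⟩ : Move pd)])[t]? = some ⟨i', some a'⟩ ∧
          encS (state pd ddProf ((h ++ [(⟨i, c⟩ : Move pd)]).take t)) = s) ↔
        (h[t]? = some ⟨i', some a'⟩ ∧ encS (state pd ddProf (h.take t)) = s) := by
      intro t ht
      rw [Finset.mem_range] at ht
      rw [hget t ht, htake t (le_of_lt ht)]
    have hbase := inv.hused i' a' s
    have hlastget : (h ++ [(⟨i, c⟩ : Move pd)])[h.length]? = some ⟨i, c⟩ := by simp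
    have htake2 : (h ++ [(⟨i, c⟩ : Move pd)]).take h.length = h := by
      simpa using htake h.length le_rfl
    cases c with
    | none =>
      have hno : ¬ ((h ++ [(⟨i, none⟩ : Move pd)])[h.length]? = some ⟨i', some a'⟩ ∧
          encS (state pd ddProf ((h ++ [(⟨i, none⟩ : Move pd)]).take h.length)) = s) := by
        rintro ⟨h1, -⟩
        rw [hlastget] at h1
        obtain ⟨-, h3⟩ := move_mk_inj.mp (Option.some.inj h1)
        cases h3
      show p.used.count _ = _
      rw [hlen, hrange, if_neg hno, Finset.filter_congr hcongr, ← hbase]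
    | some a =>
      show List.count ((i', a'), s) ((((i, a), p.st) : (Fin 2 × Fin 2) × S2) :: p.used) = _
      rw [List.count_cons, hlen, hrange, Finset.filter_congr hcongr]
      by_cases hP : ((h ++ [(⟨i, some a⟩ : Move pd)])[h.length]? = some ⟨i', some a'⟩ ∧
          encS (state pd ddProf ((h ++ [(⟨i, some a⟩ : Move pd)]).take h.length)) = s)
      · rw [if_pos hP, Finset.card_insert_of_notMem (by simp)]
        obtain ⟨h3, h4⟩ := hP
        rw [hlastget] at h3
        obtain ⟨h5, h6⟩ := move_mk_inj.mp (Option.some.inj h3)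
        rw [htake2] at h4
        have h7 : (((i, a), p.st) : (Fin 2 × Fin 2) × S2) = ((i', a'), s) := by
          rw [← h5, ← Option.some.inj h6, ← h4, inv.hst]
        rw [if_pos (beq_iff_eq.mpr h7), hbase]
      · rw [if_neg hP]
        have h1 : ¬ (((((i, a), p.st) : (Fin 2 × Fin 2) × S2) == ((i', a'), s)) = true) := by
          rw [beq_iff_eq]
          intro hc
          apply hP
          obtain ⟨h4, h5⟩ := Prod.ext_iff.mp hc
          obtain ⟨h6, h7⟩ := Prod.ext_iff.mp h4
          simp only at h4 h5 h6 h7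
          constructor
          · rw [hlastget, h6, h7]
          · rw [htake2, ← h5, ← inv.hst]
        rw [if_neg h1, hbase]
        omega
  case hterm =>
    have hTS := terminalStay_snoc h ⟨i, c⟩
    have hTP := terminalPass_snoc h ⟨i, c⟩
    show (_ || _) = true ↔ Terminal pd ddProf (h ++ [⟨i, c⟩])
    rw [Bool.or_eq_true]
    unfold Terminal
    rw [hTS, hTP]
    constructor
    · rintro (h1 | h2)
      · left
        rw [Bool.and_eq_true, Bool.and_eq_true] at h1
        obtain ⟨⟨ha, hb⟩, hc⟩ := h1
        have ha' : c = some (atS p.st i) :=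
          of_decide_eq_true
            (inst := (inferInstance : DecidableEq (Option (Fin 2))) c (some (atS p.st i))) ha
        have hb' : p.rf = p.st := of_decide_eq_true hb
        rw [inv.hst, atS_encS] at ha'
        rw [inv.hst, inv.hrf] at hb'
        refine ⟨ha', encS_inj hb', ?_⟩
        rcases hpr : p.pr with - | j
        · rw [hpr] at hc; exact absurd hc (by simp)
        · rw [hpr] at hc
          exact ⟨j, by rw [← inv.hpr, hpr], of_decide_eq_true hc⟩
      · right
        rw [Bool.and_eq_true] at h2
        obtain ⟨ha, hb⟩ := h2
        have ha' : c = none := of_decide_eq_true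
          (inst := (inferInstance : DecidableEq (Option (Fin 2))) c none) ha
        refine ⟨ha', ?_⟩
        rcases hla : p.la with - | ⟨j, cj⟩
        · rw [hla] at hb; exact absurd hb (by simp)
        · rw [hla] at hb
          cases cj with
          | some a0 => exact absurd hb (by simp)
          | none =>
            have hb' : j ≠ i := of_decide_eq_true hb
            have hla2 := inv.hla
            rw [hla] at hla2
            rcases hl2 : h.getLast? with - | m'
            · rw [hl2] at hla2; exact absurd hla2 (by simp)
            · rw [hl2] at hla2
              have h7 : (j, (none : Option (Fin 2))) = encM m' := by simpa using hla2
              obtain ⟨h5, h6⟩ := Prod.ext_iff.mp h7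
              have h5' : j = m'.1 := h5
              have h6' : (none : Option (Fin 2)) = m'.2 := h6
              refine ⟨m', rfl, h6'.symm, ?_⟩
              show m'.1 ≠ i
              rw [← h5']; exact hb'
    · rintro (⟨h1, h2, j, h3, h4⟩ | ⟨h1, m', h2, h3, h4⟩)
      · left
        rw [Bool.and_eq_true, Bool.and_eq_true]
        refine ⟨⟨?_, ?_⟩, ?_⟩
        · rw [decide_eq_true_eq, inv.hst, atS_encS]; exact h1
        · rw [decide_eq_true_eq, inv.hst, inv.hrf, encS_eq_iff]; exact h2
        · rw [inv.hpr, h3]; exact decide_eq_true h4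
      · right
        rw [Bool.and_eq_true]
        refine ⟨decide_eq_true h1, ?_⟩
        rw [inv.hla, h2]
        rcases m' with ⟨j', c'⟩
        cases c' with
        | some a0 => exact absurd h3 (by simp)
        | none => exact decide_eq_true h4

lemma InvP_posOf (h : Hist pd) : InvP h (posOf h) := by
  induction h using List.reverseRecOn with
  | nil => exact InvP_nil
  | append_singleton h m ih => rw [posOf_snoc]; exact InvP_step ih m

/-! ### feasibility and the backward-induction value -/

def feasC (p : Pos) (c : Option (Fin 2)) : Bool :=
  match c with
  | none => true
  | some a => (p.used.count ((p.turn, a), p.st) == 0) &&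
      (!(decide (a = atS p.st p.turn)) ||
        decide (uz (p.turn + 1) p.rf ≤ uz (p.turn + 1) p.st))

/-- Choice-update: replace current best `r` by value `v` (with move `c`) if
feasible (`f`) and better, with a cutoff when the maximum `4` is attained. -/
def pick (i : Fin 2) (r : S2 × Option (Fin 2)) (f : Bool) (v : S2) (c : Option (Fin 2)) :
    S2 × Option (Fin 2) :=
  if uz i r.1 = 4 then r else if f then (if uz i r.1 < uz i v then (v, c) else r) else r

lemma pick_left_le (i : Fin 2) (r : S2 × Option (Fin 2)) (f : Bool) (v : S2)
    (c : Option (Fin 2)) : uz i r.1 ≤ uz i (pick i r f v c).1 := by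
  unfold pick
  split_ifs <;> simp <;> omega

lemma pick_right_le (i : Fin 2) (r : S2 × Option (Fin 2)) {f : Bool} (v : S2)
    (c : Option (Fin 2)) (hf : f = true) : uz i v ≤ uz i (pick i r f v c).1 := by
  subst hf
  unfold pick
  have h4 := uz_le_four i v
  by_cases h1 : uz i r.1 = 4
  · rw [if_pos h1]; omega
  · rw [if_neg h1, if_pos rfl]
    by_cases h2 : uz i r.1 < uz i v
    · rw [if_pos h2]
    · rw [if_neg h2]; omega

lemma pick_eq (i : Fin 2) (r : S2 × Option (Fin 2)) (f : Bool) (v : S2)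
    (c : Option (Fin 2)) : pick i r f v c = r ∨ (f = true ∧ pick i r f v c = (v, c)) := by
  unfold pick
  split_ifs with h1 h2 h3
  · exact Or.inl rfl
  · exact Or.inr ⟨h2, rfl⟩
  · exact Or.inl rfl
  · exact Or.inl rfl

def VfC : ℕ → Pos → S2 × Option (Fin 2)
  | 0, p => (p.rf, none)
  | (t+1), p =>
    if p.term then (p.rf, none) else
    let i := p.turn
    let r0 : S2 × Option (Fin 2) := ((VfC t (stepP p (i, none))).1, none)
    let r1 := pick i r0 (feasC p (some 1)) (VfC t (stepP p (i, some 1))).1 (some 1)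
    pick i r1 (feasC p (some 0)) (VfC t (stepP p (i, some 0))).1 (some 0)

lemma pick_false (i : Fin 2) (r : S2 × Option (Fin 2)) (v : S2) (c : Option (Fin 2)) :
    pick i r false v c = r := by
  unfold pick
  split_ifs with h1 h2 <;> simp_all

lemma VfC_succ_eq {t : ℕ} {p : Pos} (hterm : p.term = false) :
    VfC (t+1) p =
      pick p.turn
        (pick p.turn ((VfC t (stepP p (p.turn, none))).1, none)
          (feasC p (some 1)) (VfC t (stepP p (p.turn, some 1))).1 (some 1))
        (feasC p (some 0)) (VfC t (stepP p (p.turn, some 0))).1 (some 0) := by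
  simp only [VfC, hterm, Bool.false_eq_true, if_false]

lemma VfC_term_eq {t : ℕ} {p : Pos} (hterm : p.term = true) :
    VfC t p = (p.rf, none) := by
  cases t with
  | zero => rfl
  | succ t => simp only [VfC, hterm, if_true]

lemma VfC_spec {t : ℕ} {p : Pos} (hterm : p.term = false) :
    feasC p (VfC (t+1) p).2 = true ∧
    (VfC (t+1) p).1 = (VfC t (stepP p (p.turn, (VfC (t+1) p).2))).1 ∧
    ∀ c, feasC p c = true →
      uz p.turn (VfC t (stepP p (p.turn, c))).1 ≤ uz p.turn (VfC (t+1) p).1 := by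
  have hv := VfC_succ_eq (t := t) hterm
  set v0 : S2 := (VfC t (stepP p (p.turn, some 0))).1 with hv0
  set v1 : S2 := (VfC t (stepP p (p.turn, some 1))).1 with hv1
  set r0 : S2 × Option (Fin 2) := ((VfC t (stepP p (p.turn, none))).1, none) with hr0
  set r1 := pick p.turn r0 (feasC p (some 1)) v1 (some 1) with hr1
  have h01 : uz p.turn r0.1 ≤ uz p.turn r1.1 := pick_left_le _ _ _ _ _
  have h12 : uz p.turn r1.1 ≤ uz p.turn (VfC (t+1) p).1 := by
    rw [hv]; exact pick_left_le _ _ _ _ _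
  refine ⟨?_, ?_, ?_⟩
  · -- feasibility of the chosen move
    rw [hv]
    rcases pick_eq p.turn r1 (feasC p (some 0)) v0 (some 0) with hA | ⟨hf0, hA⟩
    · rw [hA]
      rcases pick_eq p.turn r0 (feasC p (some 1)) v1 (some 1) with hB | ⟨hf1, hB⟩
      · rw [hr1, hB]; rfl
      · rw [hr1, hB]; exact hf1
    · rw [hA]; exact hf0
  · -- value equation
    rw [hv]
    rcases pick_eq p.turn r1 (feasC p (some 0)) v0 (some 0) with hA | ⟨hf0, hA⟩
    · rw [hA]
      rcases pick_eq p.turn r0 (feasC p (some 1)) v1 (some 1) with hB | ⟨hf1, hB⟩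
      · rw [hr1, hB]
      · rw [hr1, hB]
    · rw [hA]
  · -- optimality
    intro c hc
    match c with
    | none => exact le_trans h01 h12
    | some 1 => exact le_trans (pick_right_le p.turn r0 v1 (some 1) hc) h12
    | some 0 => rw [hv]; exact pick_right_le p.turn r1 v0 (some 0) hc

set_option maxRecDepth 100000 in
set_option maxHeartbeats 12000000 in
lemma VfC_root : (VfC 60 pos0).1 = ((0 : Fin 2), (0 : Fin 2)) := by decide

/-! ### bridges between encoded and real definitions -/

lemma countAct_eq {h : Hist pd} {p : Pos} (inv : InvP h p) (i a : Fin 2) :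
    countAct pd ddProf h ⟨i, some a⟩ = p.used.count ((i, a), encS (state pd ddProf h)) := by
  rw [inv.hused]
  unfold countAct
  congr 1
  apply Finset.filter_congr
  intro t ht
  exact and_congr Iff.rfl encS_eq_iff.symm

lemma avail_iff {h : Hist pd} {p : Pos} (inv : InvP h p) (c : Option (Fin 2)) :
    @availAct 2 pd ddProf 1 h (altI h) c ↔
      (∀ a : Fin 2, c = some a → p.used.count ((altI h, a), p.st) = 0) := by
  unfold availAct
  constructor
  · intro H a hc
    have h2 := H a hc
    rw [countAct_eq inv, ← inv.hst] at h2
    omega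
  · intro H a hc
    erw [countAct_eq inv, ← inv.hst, H a hc]
    omega

lemma feasC_iff {h : Hist pd} {p : Pos} (inv : InvP h p) (c : Option (Fin 2)) :
    feasC p c = true ↔
      (@availAct 2 pd ddProf 1 h (altI h) c ∧
       (c = some (state pd ddProf h (altI h)) →
         ∀ j, j ≠ altI h → pd.u j (refpt pd ddProf h) ≤ pd.u j (state pd ddProf h))) := by
  have hstay : ∀ a : Fin 2, a = atS p.st p.turn ↔ a = state pd ddProf h (altI h) := by
    intro a; rw [inv.hst, atS_encS, inv.hturn]
  have hnhp : uz (p.turn + 1) p.rf ≤ uz (p.turn + 1) p.st ↔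
      (∀ j, j ≠ altI h → pd.u j (refpt pd ddProf h) ≤ pd.u j (state pd ddProf h)) := by
    constructor
    · intro h2 j hj
      rw [u_le_iff_uz, ← inv.hrf, ← inv.hst, (fin2_ne_iff (altI h) j).mp hj, ← inv.hturn]
      exact h2
    · intro h2
      have := h2 (altI h + 1) (by rw [fin2_ne_iff])
      rw [u_le_iff_uz, ← inv.hrf, ← inv.hst, ← inv.hturn] at this
      exact this
  cases c with
  | none =>
    simp only [show feasC p none = true from rfl, true_iff]
    refine ⟨?_, ?_⟩
    · intro a hc; cases hc
    · intro hc; cases hc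
  | some a =>
    show ((p.used.count ((p.turn, a), p.st) == 0) &&
      (!(decide (a = atS p.st p.turn)) ||
        decide (uz (p.turn + 1) p.rf ≤ uz (p.turn + 1) p.st))) = true ↔ _
    rw [Bool.and_eq_true, Bool.or_eq_true, beq_iff_eq, Bool.not_eq_true',
      decide_eq_false_iff_not, decide_eq_true_eq]
    constructor
    · rintro ⟨h1, h2⟩
      refine ⟨?_, ?_⟩
      · rw [avail_iff inv]
        intro a' hc
        rw [← Option.some.inj hc, ← inv.hturn]
        exact h1
      · intro hc
        have ha : a = state pd ddProf h (altI h) := Option.some.inj hc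
        rcases h2 with h2 | h2
        · exact absurd ((hstay a).mpr ha) h2
        · exact hnhp.mp h2
    · rintro ⟨h1, h2⟩
      refine ⟨?_, ?_⟩
      · rw [avail_iff inv] at h1
        rw [inv.hturn]
        exact h1 a rfl
      · by_cases hst : a = atS p.st p.turn
        · right
          exact hnhp.mpr (h2 (by rw [(hstay a).mp hst]; rfl))
        · left; exact hst

/-! ### IsNode lemmas -/

lemma length_take_lt {h : Hist pd} {t t' : ℕ} (ht' : t' < (h.take t).length) :
    t' < h.length ∧ t' < t := by
  rw [List.length_take] at ht'
  omega

lemma IsNode_take {h : Hist pd} (hn : IsNode pd ddProf 1 altI h) (t : ℕ) :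
    IsNode pd ddProf 1 altI (h.take t) := by
  have htk : ∀ t', t' < t → (h.take t).take t' = h.take t' := by
    intro t' ht'
    rw [List.take_take]
    congr 1
    omega
  constructor
  · intro t' ht'
    obtain ⟨h1, h2⟩ := length_take_lt ht'
    have hget : (h.take t).get ⟨t', ht'⟩ = h.get ⟨t', h1⟩ := by
      simp [List.get_eq_getElem, List.getElem_take]
    rw [hget, htk t' h2]
    exact hn.mover t' h1
  · intro t' ht'
    obtain ⟨h1, h2⟩ := length_take_lt ht'
    have hget : (h.take t).get ⟨t', ht'⟩ = h.get ⟨t', h1⟩ := by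
      simp [List.get_eq_getElem, List.getElem_take]
    rw [hget, htk t' h2]
    exact hn.avail t' h1
  · intro t' ht'
    obtain ⟨h1, h2⟩ := length_take_lt ht'
    rw [htk t' h2]
    exact hn.nonterm t' h1

lemma IsNode_snoc {h : Hist pd} (hn : IsNode pd ddProf 1 altI h)
    (hnt : ¬ Terminal pd ddProf h) {m : Move pd} (hm : m.1 = altI h)
    (hav : availAct pd ddProf 1 h m.2) : IsNode pd ddProf 1 altI (h ++ [m]) := by
  have hlen : (h ++ [m]).length = h.length + 1 := by simp
  have htk : ∀ t, t ≤ h.length → (h ++ [m]).take t = h.take t := fun t ht =>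
    state_take_append ht
  have htkl : (h ++ [m]).take h.length = h := by
    rw [htk h.length le_rfl, List.take_length]
  have hgetlt : ∀ (t : ℕ) (ht2 : t < h.length) (ht : t < (h ++ [m]).length),
      (h ++ [m]).get ⟨t, ht⟩ = h.get ⟨t, ht2⟩ := by
    intro t ht2 ht
    simp [List.get_eq_getElem, List.getElem_append, ht2]
  have hgeteq : ∀ (ht : h.length < (h ++ [m]).length),
      (h ++ [m]).get ⟨h.length, ht⟩ = m := by
    intro ht
    simp [List.get_eq_getElem]
  constructor
  · intro t ht
    rcases Nat.lt_or_ge t h.length with h2 | h2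
    · rw [hgetlt t h2 ht, htk t (le_of_lt h2)]
      exact hn.mover t h2
    · have h3 : t = h.length := by rw [hlen] at ht; omega
      subst h3
      rw [hgeteq ht, htkl]
      exact hm
  · intro t ht
    rcases Nat.lt_or_ge t h.length with h2 | h2
    · rw [hgetlt t h2 ht, htk t (le_of_lt h2)]
      exact hn.avail t h2
    · have h3 : t = h.length := by rw [hlen] at ht; omega
      subst h3
      rw [htkl, hgeteq ht]
      exact hav
  · intro t ht
    rcases Nat.lt_or_ge t h.length with h2 | h2
    · rw [htk t (le_of_lt h2)]
      exact hn.nonterm t h2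
    · have h3 : t = h.length := by rw [hlen] at ht; omega
      subst h3
      rw [htkl]
      exact hnt

/-! ### length bound for nodes -/

lemma getElem?_take_lt {h : Hist pd} {t1 t2 : ℕ} (hlt : t1 < t2) :
    (h.take t2)[t1]? = h[t1]? := by
  rw [List.getElem?_take]
  rw [if_pos hlt]

lemma IsNode_length_le {h : Hist pd} (hn : IsNode pd ddProf 1 altI h) :
    h.length ≤ 58 := by
  classical
  set L := h.length with hL
  set NP : Finset ℕ := (Finset.range L).filter
    (fun t => ∃ i a, h[t]? = some ⟨i, some a⟩) with hNPdef
  set PS : Finset ℕ := (Finset.range L).filter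
    (fun t => ¬ ∃ i a, h[t]? = some ⟨i, some a⟩) with hPSdef
  have hsplit : NP.card + PS.card = L := by
    rw [hNPdef, hPSdef, Finset.card_filter_add_card_filter_not, Finset.card_range]
  have hNP : NP.card ≤ 28 := by
    have hinj : Set.InjOn (fun t => (h[t]?, encS (state pd ddProf (h.take t)))) ↑NP := by
      have key : ∀ t1 t2, t1 ∈ NP → t2 ∈ NP →
          (h[t1]?, encS (state pd ddProf (h.take t1))) =
          (h[t2]?, encS (state pd ddProf (h.take t2))) → t1 < t2 → False := by
        intro t1 t2 h1 h2 heq hlt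
        obtain ⟨i2, a2, hm2⟩ := (Finset.mem_filter.mp h2).2
        have ht2L : t2 < L := Finset.mem_range.mp (Finset.mem_filter.mp h2).1
        have heq1 : h[t1]? = h[t2]? := congrArg Prod.fst heq
        have heq2 : encS (state pd ddProf (h.take t1)) =
            encS (state pd ddProf (h.take t2)) := congrArg Prod.snd heq
        have hav := hn.avail t2 ht2L
        have hget2 : h.get ⟨t2, ht2L⟩ = ⟨i2, some a2⟩ := by
          have hg : h[t2]? = some (h.get ⟨t2, ht2L⟩) := by
            simp [List.get_eq_getElem, List.getElem?_eq_getElem]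
          rw [hm2] at hg
          exact (Option.some.inj hg).symm
        rw [hget2] at hav
        have hca := hav a2 rfl
        have hmem : t1 ∈ (Finset.range (h.take t2).length).filter
            (fun t => (h.take t2)[t]? = some (⟨i2, some a2⟩ : Move pd) ∧
              state pd ddProf ((h.take t2).take t) = state pd ddProf (h.take t2)) := by
          rw [Finset.mem_filter, Finset.mem_range]
          refine ⟨by rw [List.length_take]; omega, ?_, ?_⟩
          · rw [getElem?_take_lt hlt, heq1]
            exact hm2
          · rw [List.take_take, min_eq_left (le_of_lt hlt)]
            exact encS_inj heq2
        have hpos : 0 < countAct pd ddProf (h.take t2) ⟨i2, some a2⟩ := by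
          unfold countAct
          exact Finset.card_pos.mpr ⟨t1, hmem⟩
        have hca' : countAct pd ddProf (h.take t2) ⟨i2, some a2⟩ < 1 := hca
        omega
      intro t1 h1 t2 h2 heq
      by_contra hne
      rcases lt_or_gt_of_ne hne with hlt | hlt
      · exact key t1 t2 h1 h2 heq hlt
      · exact key t2 t1 h2 h1 heq.symm hlt
    have hmaps : ∀ t ∈ NP, (h[t]?, encS (state pd ddProf (h.take t))) ∈
        (Finset.univ : Finset (Option (Move pd) × S2)) := fun t _ => Finset.mem_univ _
    have hcard := Finset.card_le_card_of_injOn _ hmaps hinj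
    have huniv : (Finset.univ : Finset (Option (Move pd) × S2)).card = 28 := by decide
    omega
  have hPS : PS.card ≤ NP.card + 2 := by
    have hmaps : ∀ t ∈ PS, t + 1 ∈ NP ∪ {L - 1, L} := by
      intro t htPS
      have htL : t < L := Finset.mem_range.mp (Finset.mem_filter.mp htPS).1
      have htpass : ¬ ∃ i a, h[t]? = some ⟨i, some a⟩ := (Finset.mem_filter.mp htPS).2
      have hm1 : h[t]? = some (h.get ⟨t, htL⟩) := by
        simp [List.get_eq_getElem, List.getElem?_eq_getElem]
      have hm1pass : (h.get ⟨t, htL⟩).2 = none := by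
        rcases hc : (h.get ⟨t, htL⟩).2 with - | a
        · rfl
        · exfalso
          apply htpass
          refine ⟨(h.get ⟨t, htL⟩).1, a, ?_⟩
          have heta : (⟨(h.get ⟨t, htL⟩).1, some a⟩ : Move pd) = h.get ⟨t, htL⟩ := by
            rw [← hc]
          rw [hm1]
          exact congrArg some heta.symm
      by_cases hA : t + 1 = L
      · exact Finset.mem_union_right _ (by simp [hA])
      by_cases hB : t + 2 = L
      · exact Finset.mem_union_right _ (by simp; omega)
      have ht2L : t + 2 < L := by omega
      have ht1L : t + 1 < L := by omega
      -- if t+1 were a pass, take (t+2) would be terminal, contradiction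
      rcases hc2 : (h.get ⟨t + 1, ht1L⟩).2 with - | a2
      · exfalso
        apply hn.nonterm (t + 2) ht2L
        right
        have htk2 : h.take (t + 2) = (h.take t ++ [h.get ⟨t, htL⟩]) ++ [h.get ⟨t + 1, ht1L⟩] := by
          rw [List.take_succ, List.take_succ]
          congr 1
          · congr 1
            rw [hm1]; rfl
          · have : h[t+1]? = some (h.get ⟨t + 1, ht1L⟩) := by
              simp [List.get_eq_getElem, List.getElem?_eq_getElem]
            rw [this]; rfl
        have hlen2 : (h.take (t + 2)).length = t + 2 := by
          rw [List.length_take]; omega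
        have hdrop : (h.take (t + 2)).drop ((h.take (t + 2)).length - 2) =
            [h.get ⟨t, htL⟩, h.get ⟨t + 1, ht1L⟩] := by
          rw [hlen2, htk2, List.append_assoc]
          have hlt : (h.take t).length = t := by rw [List.length_take]; omega
          have hd2 : t + 2 - 2 = (h.take t).length := by rw [hlt]; omega
          rw [hd2, List.drop_left]
          rfl
        have hmov1 : (h.get ⟨t, htL⟩).1 = altI (h.take t) := hn.mover t htL
        have hmov2 : (h.get ⟨t + 1, ht1L⟩).1 = altI (h.take (t + 1)) := hn.mover (t + 1) ht1L
        have hmovne : (h.get ⟨t, htL⟩).1 ≠ (h.get ⟨t + 1, ht1L⟩).1 := by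
          rw [hmov1, hmov2]
          simp only [altI, List.length_take]
          intro hcon
          rw [Fin.mk.injEq] at hcon
          omega
        refine ⟨by rw [hlen2]; omega, ?_, ?_⟩
        · rw [hdrop]
          intro mv hmv
          rcases List.mem_pair.mp hmv with rfl | rfl
          · exact hm1pass
          · exact hc2
        · rw [hdrop]
          intro i
          rcases fin2_cover hmovne i with rfl | rfl
          · exact ⟨h.get ⟨t, htL⟩, by simp, rfl⟩
          · exact ⟨h.get ⟨t + 1, ht1L⟩, by simp, rfl⟩
      · -- t+1 is a non-pass, hence in NP
        apply Finset.mem_union_left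
        rw [hNPdef, Finset.mem_filter, Finset.mem_range]
        refine ⟨ht1L, (h.get ⟨t + 1, ht1L⟩).1, a2, ?_⟩
        have hg : h[t+1]? = some (h.get ⟨t + 1, ht1L⟩) := by
          simp [List.get_eq_getElem, List.getElem?_eq_getElem]
        have heta : (⟨(h.get ⟨t + 1, ht1L⟩).1, some a2⟩ : Move pd) = h.get ⟨t + 1, ht1L⟩ := by
          rw [← hc2]
        rw [hg]
        exact congrArg some heta.symm
    have hinj : Set.InjOn (· + 1) ↑PS := by
      intro a _ b _ e
      simpa using e
    have hcard := Finset.card_le_card_of_injOn _ hmaps hinj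
    have hu : (NP ∪ {L - 1, L}).card ≤ NP.card + 2 := by
      refine le_trans (Finset.card_union_le _ _) ?_
      have : ({L - 1, L} : Finset ℕ).card ≤ 2 := by
        refine le_trans (Finset.card_insert_le _ _) ?_
        simp
      omega
    omega
  omega

/-! ### fuel stability of `VfC` -/

lemma stepP_posOf {h : Hist pd} (c : Option (Fin 2)) :
    stepP (posOf h) ((posOf h).turn, c) = posOf (h ++ [⟨altI h, c⟩]) := by
  rw [posOf_snoc, (InvP_posOf h).hturn]
  rfl

lemma VfC_stable : ∀ d : ℕ, ∀ h : Hist pd, IsNode pd ddProf 1 altI h →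
    59 - h.length ≤ d → ∀ t s : ℕ, 59 - h.length ≤ t → 59 - h.length ≤ s →
    VfC t (posOf h) = VfC s (posOf h) := by
  intro d
  induction d with
  | zero =>
    intro h hn hd t s _ _
    have := IsNode_length_le hn
    omega
  | succ d ih =>
    intro h hn hd t s hts hss
    have hlen := IsNode_length_le hn
    obtain ⟨t', rfl⟩ : ∃ t', t = t' + 1 := ⟨t - 1, by omega⟩
    obtain ⟨s', rfl⟩ : ∃ s', s = s' + 1 := ⟨s - 1, by omega⟩
    by_cases hT : Terminal pd ddProf h
    · have hbt : (posOf h).term = true := (InvP_posOf h).hterm.mpr hT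
      rw [VfC_term_eq hbt, VfC_term_eq hbt]
    · have hbt : (posOf h).term = false := by
        rcases hb : (posOf h).term with - | -
        · rfl
        · exact absurd ((InvP_posOf h).hterm.mp hb) hT
      have hchild : ∀ c : Option (Fin 2), feasC (posOf h) c = true →
          VfC t' (stepP (posOf h) ((posOf h).turn, c)) =
          VfC s' (stepP (posOf h) ((posOf h).turn, c)) := by
        intro c hc
        have hav := ((feasC_iff (InvP_posOf h) c).mp hc).1
        have hn' : IsNode pd ddProf 1 altI (h ++ [(⟨altI h, c⟩ : Move pd)]) :=
          IsNode_snoc hn hT rfl hav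
        have hlen' : (h ++ [(⟨altI h, c⟩ : Move pd)]).length = h.length + 1 := by simp
        rw [stepP_posOf c]
        exact ih _ hn' (by omega) t' s' (by omega) (by omega)
      rw [VfC_succ_eq hbt, VfC_succ_eq hbt]
      rw [hchild none rfl]
      by_cases h1 : feasC (posOf h) (some 1) = true
      · rw [hchild (some 1) h1]
        by_cases h0 : feasC (posOf h) (some 0) = true
        · rw [hchild (some 0) h0]
        · rw [Bool.not_eq_true] at h0
          rw [h0, pick_false, pick_false]
      · rw [Bool.not_eq_true] at h1
        rw [h1, pick_false, pick_false]
        by_cases h0 : feasC (posOf h) (some 0) = true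
        · rw [hchild (some 0) h0]
        · rw [Bool.not_eq_true] at h0
          rw [h0, pick_false, pick_false]

/-! ### the value function and BI strategy -/

def Vv (h : Hist pd) : S2 := (VfC 60 (posOf h)).1

def Vp (h : Hist pd) : Profile pd := decS (Vv h)

def bestC (h : Hist pd) : Option (Fin 2) := (VfC 60 (posOf h)).2

def sigmaStar : StratProfile pd := fun _ h => bestC h

lemma u_Vp (j : Fin 2) (h : Hist pd) : pd.u j (Vp h) = ((uz j (Vv h) : ℤ) : ℝ) :=
  u_decS j (Vv h)

lemma posTerm_false {h : Hist pd} (hT : ¬ Terminal pd ddProf h) :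
    (posOf h).term = false := by
  rcases hb : (posOf h).term with - | -
  · rfl
  · exact absurd ((InvP_posOf h).hterm.mp hb) hT

lemma posTerm_true {h : Hist pd} (hT : Terminal pd ddProf h) :
    (posOf h).term = true := (InvP_posOf h).hterm.mpr hT

lemma Vp_term {h : Hist pd} (hT : Terminal pd ddProf h) :
    Vp h = refpt pd ddProf h := by
  unfold Vp Vv
  rw [VfC_term_eq (posTerm_true hT)]
  show decS (posOf h).rf = _
  rw [(InvP_posOf h).hrf, decS_encS]

lemma bestC_feas {h : Hist pd} (hT : ¬ Terminal pd ddProf h) :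
    feasC (posOf h) (bestC h) = true :=
  (VfC_spec (t := 59) (posTerm_false hT)).1

lemma child_stable {h : Hist pd} (hn : IsNode pd ddProf 1 altI h)
    (hT : ¬ Terminal pd ddProf h) {c : Option (Fin 2)}
    (hc : feasC (posOf h) c = true) :
    VfC 59 (posOf (h ++ [(⟨altI h, c⟩ : Move pd)])) =
      VfC 60 (posOf (h ++ [(⟨altI h, c⟩ : Move pd)])) := by
  have hav := ((feasC_iff (InvP_posOf h) c).mp hc).1
  have hn' : IsNode pd ddProf 1 altI (h ++ [(⟨altI h, c⟩ : Move pd)]) :=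
    IsNode_snoc hn hT rfl hav
  have hlen' : (h ++ [(⟨altI h, c⟩ : Move pd)]).length = h.length + 1 := by simp
  exact VfC_stable 59 _ hn' (by omega) 59 60 (by omega) (by omega)

lemma child_node {h : Hist pd} (hn : IsNode pd ddProf 1 altI h)
    (hT : ¬ Terminal pd ddProf h) {c : Option (Fin 2)}
    (hc : feasC (posOf h) c = true) :
    IsNode pd ddProf 1 altI (h ++ [(⟨altI h, c⟩ : Move pd)]) :=
  IsNode_snoc hn hT rfl ((feasC_iff (InvP_posOf h) c).mp hc).1

lemma VfC_spec60 {p : Pos} (hterm : p.term = false) :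
    feasC p (VfC 60 p).2 = true ∧
    (VfC 60 p).1 = (VfC 59 (stepP p (p.turn, (VfC 60 p).2))).1 ∧
    ∀ c, feasC p c = true →
      uz p.turn (VfC 59 (stepP p (p.turn, c))).1 ≤ uz p.turn (VfC 60 p).1 :=
  VfC_spec (t := 59) hterm

lemma Vv_step {h : Hist pd} (hn : IsNode pd ddProf 1 altI h)
    (hT : ¬ Terminal pd ddProf h) :
    Vv (h ++ [(⟨altI h, bestC h⟩ : Move pd)]) = Vv h := by
  have hbt := posTerm_false hT
  have hval := (VfC_spec60 hbt).2.1
  rw [show (VfC 60 (posOf h)).2 = bestC h from rfl] at hval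
  rw [stepP_posOf (bestC h)] at hval
  rw [child_stable hn hT (bestC_feas hT)] at hval
  exact hval.symm

lemma Vv_opt {h : Hist pd} (hn : IsNode pd ddProf 1 altI h)
    (hT : ¬ Terminal pd ddProf h) {c : Option (Fin 2)}
    (hc : feasC (posOf h) c = true) :
    uz (altI h) (Vv (h ++ [(⟨altI h, c⟩ : Move pd)])) ≤ uz (altI h) (Vv h) := by
  have hbt := posTerm_false hT
  have hopt := (VfC_spec60 hbt).2.2 c hc
  rw [stepP_posOf c] at hopt
  rw [child_stable hn hT hc] at hopt
  rw [(InvP_posOf h).hturn] at hopt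
  exact hopt

lemma Vp_step {h : Hist pd} (hn : IsNode pd ddProf 1 altI h)
    (hT : ¬ Terminal pd ddProf h) :
    Vp (h ++ [(⟨altI h, bestC h⟩ : Move pd)]) = Vp h := by
  unfold Vp
  rw [Vv_step hn hT]

/-! ### play lemmas -/

open Classical in
lemma playN_succ (σ : StratProfile pd) (t : ℕ) (h : Hist pd) :
    playN pd ddProf altI σ (t + 1) h = if Terminal pd ddProf h then h
      else playN pd ddProf altI σ t (h ++ [⟨altI h, σ (altI h) h⟩]) := rfl

lemma playN_terminal {σ : StratProfile pd} {h : Hist pd}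
    (hT : Terminal pd ddProf h) (t : ℕ) :
    playN pd ddProf altI σ t h = h := by
  cases t with
  | zero => rfl
  | succ t => rw [playN_succ, if_pos hT]

lemma playN_nonterm {σ : StratProfile pd} {h : Hist pd}
    (hT : ¬ Terminal pd ddProf h) (t : ℕ) :
    playN pd ddProf altI σ (t + 1) h =
      playN pd ddProf altI σ t (h ++ [(⟨altI h, σ (altI h) h⟩ : Move pd)]) := by
  rw [playN_succ, if_neg hT]

lemma playN_add (σ : StratProfile pd) (t s : ℕ) :
    ∀ h : Hist pd, playN pd ddProf altI σ (t + s) h =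
      playN pd ddProf altI σ s (playN pd ddProf altI σ t h) := by
  induction t with
  | zero => intro h; rw [Nat.zero_add]; rfl
  | succ t ihp =>
    intro h
    rw [show t + 1 + s = (t + s) + 1 from by omega]
    by_cases hT : Terminal pd ddProf h
    · rw [playN_terminal hT, playN_terminal hT, playN_terminal hT]
    · rw [playN_nonterm hT, playN_nonterm hT, ihp]

lemma playN_invariant {σ : StratProfile pd}
    (hval : ValidProfile pd ddProf 1 altI σ) :
    ∀ (t : ℕ) (h : Hist pd), IsNode pd ddProf 1 altI h →
      IsNode pd ddProf 1 altI (playN pd ddProf altI σ t h) ∧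
      (Terminal pd ddProf (playN pd ddProf altI σ t h) ∨
        (playN pd ddProf altI σ t h).length = h.length + t) := by
  intro t
  induction t with
  | zero => intro h hn; exact ⟨hn, Or.inr rfl⟩
  | succ t ih =>
    intro h hn
    by_cases hT : Terminal pd ddProf h
    · rw [playN_terminal hT]
      exact ⟨hn, Or.inl hT⟩
    · rw [playN_nonterm hT]
      have hn' : IsNode pd ddProf 1 altI (h ++ [(⟨altI h, σ (altI h) h⟩ : Move pd)]) :=
        IsNode_snoc hn hT rfl (hval h hn hT)
      obtain ⟨ha, hb⟩ := ih _ hn'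
      refine ⟨ha, ?_⟩
      rcases hb with hb | hb
      · exact Or.inl hb
      · right
        rw [hb]
        simp
        omega

lemma playN_reaches {σ : StratProfile pd}
    (hval : ValidProfile pd ddProf 1 altI σ) {h : Hist pd}
    (hn : IsNode pd ddProf 1 altI h) {t : ℕ} (ht : 59 ≤ h.length + t) :
    Terminal pd ddProf (playN pd ddProf altI σ t h) := by
  obtain ⟨hnode, hdisj⟩ := playN_invariant hval t h hn
  rcases hdisj with hT | hlen
  · exact hT
  · have := IsNode_length_le hnode
    omega

lemma bound_ge : 60 ≤ bound pd 1 := by decide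

lemma outcomeFrom_terminal (σ : StratProfile pd) {h : Hist pd}
    (hT : Terminal pd ddProf h) :
    outcomeFrom pd ddProf 1 altI σ h = refpt pd ddProf h := by
  unfold outcomeFrom
  rw [playN_terminal hT]

lemma outcomeFrom_step {σ : StratProfile pd}
    (hval : ValidProfile pd ddProf 1 altI σ) {h : Hist pd}
    (hn : IsNode pd ddProf 1 altI h) (hT : ¬ Terminal pd ddProf h) :
    outcomeFrom pd ddProf 1 altI σ h =
      outcomeFrom pd ddProf 1 altI σ (h ++ [(⟨altI h, σ (altI h) h⟩ : Move pd)]) := by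
  have hB := bound_ge
  have hn' : IsNode pd ddProf 1 altI (h ++ [(⟨altI h, σ (altI h) h⟩ : Move pd)]) :=
    IsNode_snoc hn hT rfl (hval h hn hT)
  have hterm : Terminal pd ddProf
      (playN pd ddProf altI σ (bound pd 1) (h ++ [(⟨altI h, σ (altI h) h⟩ : Move pd)])) :=
    playN_reaches hval hn' (by simp; omega)
  unfold outcomeFrom
  have h1 : playN pd ddProf altI σ (bound pd 1 + 1) h =
      playN pd ddProf altI σ (bound pd 1) (h ++ [(⟨altI h, σ (altI h) h⟩ : Move pd)]) :=
    playN_nonterm hT _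
  have h2 : playN pd ddProf altI σ (bound pd 1 + 1)
      (h ++ [(⟨altI h, σ (altI h) h⟩ : Move pd)]) =
      playN pd ddProf altI σ (bound pd 1) (h ++ [(⟨altI h, σ (altI h) h⟩ : Move pd)]) := by
    rw [playN_add σ (bound pd 1) 1]
    exact playN_terminal hterm 1
  rw [h1, h2]

lemma outcomeFrom_agree {σ1 σ2 : StratProfile pd} {h : Hist pd}
    (hag : ∀ (j : Fin 2) (h' : Hist pd), h <+: h' → σ1 j h' = σ2 j h') :
    outcomeFrom pd ddProf 1 altI σ1 h = outcomeFrom pd ddProf 1 altI σ2 h := by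
  have key : ∀ (t : ℕ) (h' : Hist pd), h <+: h' →
      playN pd ddProf altI σ1 t h' = playN pd ddProf altI σ2 t h' := by
    intro t
    induction t with
    | zero => intro h' _; rfl
    | succ t ih =>
      intro h' hpre
      by_cases hT : Terminal pd ddProf h'
      · rw [playN_terminal hT, playN_terminal hT]
      · rw [playN_nonterm hT, playN_nonterm hT, hag (altI h') h' hpre]
        exact ih _ (hpre.trans (List.prefix_append _ _))
  unfold outcomeFrom
  rw [key (bound pd 1 + 1) h (List.prefix_refl h)]

/-! ### `sigmaStar` is a no-harm equilibrium -/

lemma sigmaStar_valid : ValidProfile pd ddProf 1 altI sigmaStar := by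
  intro h hn hT
  exact ((feasC_iff (InvP_posOf h) (bestC h)).mp (bestC_feas hT)).1

lemma sigmaStar_nhp : SatNHP pd ddProf 1 altI sigmaStar := by
  intro h hn hT hstay j hj
  exact ((feasC_iff (InvP_posOf h) (bestC h)).mp (bestC_feas hT)).2 hstay j hj

lemma outcome_sigmaStar : ∀ (d : ℕ) (h : Hist pd), IsNode pd ddProf 1 altI h →
    59 - h.length ≤ d → outcomeFrom pd ddProf 1 altI sigmaStar h = Vp h := by
  intro d
  induction d with
  | zero =>
    intro h hn hd
    exact absurd (IsNode_length_le hn) (by omega)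
  | succ d ih =>
    intro h hn hd
    by_cases hT : Terminal pd ddProf h
    · rw [outcomeFrom_terminal _ hT, Vp_term hT]
    · have hfeas := bestC_feas hT
      have hn' := child_node hn hT hfeas
      have hlen' : (h ++ [(⟨altI h, bestC h⟩ : Move pd)]).length = h.length + 1 := by simp
      rw [outcomeFrom_step sigmaStar_valid hn hT,
        show sigmaStar (altI h) h = bestC h from rfl]
      rw [ih _ hn' (by omega)]
      exact Vp_step hn hT

lemma dev_le {i : Fin 2} {τ : Strategy pd i}
    (hval : ValidProfile pd ddProf 1 altI (Function.update sigmaStar i τ))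
    (hnhp : SatNHP pd ddProf 1 altI (Function.update sigmaStar i τ)) :
    ∀ (d : ℕ) (h : Hist pd), IsNode pd ddProf 1 altI h → 59 - h.length ≤ d →
      pd.u i (outcomeFrom pd ddProf 1 altI (Function.update sigmaStar i τ) h) ≤
        pd.u i (Vp h) := by
  intro d
  induction d with
  | zero =>
    intro h hn hd
    exact absurd (IsNode_length_le hn) (by omega)
  | succ d ih =>
    intro h hn hd
    by_cases hT : Terminal pd ddProf h
    · rw [outcomeFrom_terminal _ hT, Vp_term hT]
    · have hfeas : feasC (posOf h) (Function.update sigmaStar i τ (altI h) h) = true := by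
        refine (feasC_iff (InvP_posOf h) _).mpr ?_
        exact ⟨hval h hn hT, fun hstay => hnhp h hn hT hstay⟩
      have hn' := child_node hn hT hfeas
      have hlen' : (h ++ [(⟨altI h, Function.update sigmaStar i τ (altI h) h⟩ :
          Move pd)]).length = h.length + 1 := by simp
      rw [outcomeFrom_step hval hn hT]
      refine le_trans (ih _ hn' (by omega)) ?_
      by_cases hiq : altI h = i
      · subst hiq
        rw [u_Vp, u_Vp]
        exact_mod_cast Vv_opt hn hT hfeas
      · have hcb : Function.update sigmaStar i τ (altI h) h = bestC h := by
          rw [Function.update_of_ne hiq]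
          rfl
        rw [hcb, Vp_step hn hT]

lemma sigmaStar_NHE : NHE pd ddProf 1 altI sigmaStar := by
  refine ⟨sigmaStar_valid, sigmaStar_nhp, ?_⟩
  intro h hn hT τ hval hnhp
  have h1 := dev_le hval hnhp 59 h hn (by omega)
  rw [outcome_sigmaStar 59 h hn (by omega)]
  exact h1

/-! ### uniqueness of the NHE outcome -/

lemma NHE_outcomeFrom {σ : StratProfile pd} (hσ : NHE pd ddProf 1 altI σ) :
    ∀ (d : ℕ) (h : Hist pd), IsNode pd ddProf 1 altI h → 59 - h.length ≤ d →
      outcomeFrom pd ddProf 1 altI σ h = Vp h := by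
  obtain ⟨hval, hnhp, hbr⟩ := hσ
  intro d
  induction d with
  | zero =>
    intro h hn hd
    exact absurd (IsNode_length_le hn) (by omega)
  | succ d ih =>
    intro h hn hd
    by_cases hT : Terminal pd ddProf h
    · rw [outcomeFrom_terminal _ hT, Vp_term hT]
    · have hfeas : feasC (posOf h) (σ (altI h) h) = true := by
        refine (feasC_iff (InvP_posOf h) _).mpr ?_
        exact ⟨hval h hn hT, fun hstay => hnhp h hn hT hstay⟩
      have hn' := child_node hn hT hfeas
      have hlen' : (h ++ [(⟨altI h, σ (altI h) h⟩ : Move pd)]).length = h.length + 1 := by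
        simp
      have hout : outcomeFrom pd ddProf 1 altI σ h =
          Vp (h ++ [(⟨altI h, σ (altI h) h⟩ : Move pd)]) := by
        rw [outcomeFrom_step hval hn hT]
        exact ih _ hn' (by omega)
      have hub : pd.u (altI h) (outcomeFrom pd ddProf 1 altI σ h) ≤
          pd.u (altI h) (Vp h) := by
        rw [hout, u_Vp, u_Vp]
        exact_mod_cast Vv_opt hn hT hfeas
      -- lower bound via deviation to bestC h
      set τ : Strategy pd (altI h) := Function.update (σ (altI h)) h (bestC h) with hτ
      have hτat : τ h = bestC h := Function.update_self h (bestC h) (σ (altI h))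
      have hτat' : ∀ h', h' ≠ h → τ h' = σ (altI h) h' := fun h' hne =>
        Function.update_of_ne hne (bestC h) (σ (altI h))
      have hupd : ∀ (j : Fin 2) (h' : Hist pd), j ≠ altI h →
          Function.update σ (altI h) τ j h' = σ j h' := by
        intro j h' hj
        rw [Function.update_of_ne hj]
      have hupd2 : ∀ h' : Hist pd,
          Function.update σ (altI h) τ (altI h) h' = τ h' := by
        intro h'
        rw [Function.update_self]
      have hval' : ValidProfile pd ddProf 1 altI (Function.update σ (altI h) τ) := by
        intro h' hn2 hT2
        rcases eq_or_ne (altI h') (altI h) with hj | hj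
        · rw [hj, hupd2 h']
          rcases eq_or_ne h' h with he | he
          · subst he
            rw [hτat]
            exact ((feasC_iff (InvP_posOf h') (bestC h')).mp (bestC_feas hT2)).1
          · rw [hτat' h' he]
            have h3 := hval h' hn2 hT2
            rw [hj] at h3
            exact h3
        · rw [hupd (altI h') h' hj]
          exact hval h' hn2 hT2
      have hnhp' : SatNHP pd ddProf 1 altI (Function.update σ (altI h) τ) := by
        intro h' hn2 hT2 hstay j hj
        rcases eq_or_ne (altI h') (altI h) with hje | hje
        · rw [hje, hupd2 h'] at hstay
          rcases eq_or_ne h' h with he | he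
          · subst he
            rw [hτat] at hstay
            exact ((feasC_iff (InvP_posOf h') (bestC h')).mp (bestC_feas hT2)).2 hstay j hj
          · rw [hτat' h' he, ← hje] at hstay
            exact hnhp h' hn2 hT2 hstay j hj
        · rw [hupd (altI h') h' hje] at hstay
          exact hnhp h' hn2 hT2 hstay j hj
      have hdev := hbr h hn hT τ hval' hnhp'
      have hdevout : outcomeFrom pd ddProf 1 altI (Function.update σ (altI h) τ) h =
          Vp h := by
        have hstep := outcomeFrom_step hval' hn hT
        rw [show Function.update σ (altI h) τ (altI h) h = bestC h from by
          rw [hupd2 h, hτat]] at hstep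
        rw [hstep]
        have hagree : outcomeFrom pd ddProf 1 altI (Function.update σ (altI h) τ)
            (h ++ [(⟨altI h, bestC h⟩ : Move pd)]) =
            outcomeFrom pd ddProf 1 altI σ
            (h ++ [(⟨altI h, bestC h⟩ : Move pd)]) := by
          apply outcomeFrom_agree
          intro j h' hpre
          have hlen2 : h.length < h'.length := by
            have h4 := hpre.length_le
            simp at h4
            omega
          have hne : h' ≠ h := by
            intro he
            rw [he] at hlen2
            omega
          rcases eq_or_ne j (altI h) with hje | hje
          · rw [hje, hupd2 h', hτat' h' hne]
          · rw [hupd j h' hje]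
        rw [hagree]
        have hnb := child_node hn hT (bestC_feas hT)
        have hlb : (h ++ [(⟨altI h, bestC h⟩ : Move pd)]).length = h.length + 1 := by simp
        rw [ih _ hnb (by omega)]
        exact Vp_step hn hT
      rw [hdevout] at hdev
      exact u_pd_inj (altI h) (le_antisymm hub hdev)

lemma IsNode_nil : IsNode pd ddProf 1 altI [] := by
  constructor <;> intro t ht <;> simp at ht

lemma Vp_nil : Vp [] = ccProf := by
  unfold Vp Vv
  have hroot : (VfC 60 (posOf [])).1 = ((0 : Fin 2), (0 : Fin 2)) := VfC_root
  rw [hroot]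
  funext j
  fin_cases j <;> rfl

end PDAux

/-- In the Prisoners' Dilemma with initial reference point
`(D,D)`, `k = 1`, and the strictly alternating player function with Row moving
first, the unique no-harm equilibrium outcome is `(C,C)`. -/
theorem pd_nhe_outcome_cc :
    (∃ σ : StratProfile pd, NHE pd ddProf 1 altI σ) ∧
    (∀ σ : StratProfile pd, NHE pd ddProf 1 altI σ →
      outcome pd ddProf 1 altI σ = ccProf) := by
  constructor
  · exact ⟨sigmaStar, sigmaStar_NHE⟩
  · intro σ hσ
    show outcomeFrom pd ddProf 1 altI σ [] = ccProf
    rw [NHE_outcomeFrom hσ 59 [] IsNode_nil (by omega)]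
    exact Vp_nil

end NoHarm
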